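/- arXiv:1304.3832 — 6 statements merged into one kernel-verified Lean document; each statement's English description precedes it below -/
import Mathlib

section
/- Let ψ be a positive linear functional on ℝ^ℕ, i.e., an ℝ-linear map ψ : (ℕ → ℝ) → ℝ such that ψ(y) ≥ 0 for every y ∈ ℝ^ℕ with y(i) ≥ 0 for all i ∈ ℕ. Then there exists M ∈ ℕ such that for every v ∈ ℝ^ℕ with v(i) ≥ 0 for all i and v(i) = 0 for all i ≤ M, one has ψ(v) = 0. -/
/-- For every positive linear functional `ψ` on `ℝ^ℕ` there exists `M ∈ ℕ`
such that `ψ` vanishes on every nonnegative sequence whose components indexed by `i ≤ M`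
are all zero. -/
theorem exists_bound_of_positive_linear_functional
    (ψ : (ℕ → ℝ) →ₗ[ℝ] ℝ)
    (hpos : ∀ y : ℕ → ℝ, (∀ i, 0 ≤ y i) → 0 ≤ ψ y) :
    ∃ M : ℕ, ∀ v : ℕ → ℝ, (∀ i, 0 ≤ v i) → (∀ i ≤ M, v i = 0) → ψ v = 0 := by
  by_contra h
  push_neg at h
  choose v hv0 hvz hvne using h
  have hvpos : ∀ M, 0 < ψ (v M) := fun M =>
    lt_of_le_of_ne (hpos _ (hv0 M)) (Ne.symm (hvne M))
  set w : ℕ → ℕ → ℝ := fun M => (ψ (v M))⁻¹ • v M with hw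
  have hw0 : ∀ M i, 0 ≤ w M i := fun M i =>
    mul_nonneg (inv_nonneg.2 (hvpos M).le) (hv0 M i)
  have hwz : ∀ M i, i ≤ M → w M i = 0 := fun M i hi => by
    simp [hw, hvz M i hi]
  have hψw : ∀ M, ψ (w M) = 1 := fun M => by
    simp [hw, map_smul, inv_mul_cancel₀ (hvpos M).ne']
  set W : ℕ → ℝ := fun i => ∑ M ∈ Finset.range i, w M i with hW
  have key : ∀ N : ℕ, (N : ℝ) ≤ ψ W := by
    intro N
    have hle : ∀ i, ∑ M ∈ Finset.range N, w M i ≤ W i := by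
      intro i
      have h1 : ∑ M ∈ Finset.range N, w M i ≤ ∑ M ∈ Finset.range (max N i), w M i :=
        Finset.sum_le_sum_of_subset_of_nonneg
          (Finset.range_subset_range.2 (le_max_left _ _)) (fun M _ _ => hw0 M i)
      have h2 : ∑ M ∈ Finset.range (max N i), w M i = ∑ M ∈ Finset.range i, w M i :=
        (Finset.sum_subset (Finset.range_subset_range.2 (le_max_right _ _))
          (fun M _ hM => hwz M i (by simpa using Finset.mem_range.not.1 hM))).symm
      calc ∑ M ∈ Finset.range N, w M i ≤ ∑ M ∈ Finset.range (max N i), w M i := h1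
        _ = W i := h2
    have hdiff : 0 ≤ ψ (W - ∑ M ∈ Finset.range N, w M) := by
      apply hpos
      intro i
      have := hle i
      simp only [Pi.sub_apply, Finset.sum_apply, sub_nonneg]
      exact this
    have : ψ (∑ M ∈ Finset.range N, w M) = N := by
      rw [map_sum]
      simp [hψw]
    have h3 : ψ (W - ∑ M ∈ Finset.range N, w M) = ψ W - N := by
      rw [map_sub, this]
    linarith
  obtain ⟨N, hN⟩ := exists_nat_gt (ψ W)
  exact absurd (key N) (by linarith)
end

section
/- Let ψ be a positive linear functional on ℝ^ℕ and let M ∈ ℕ be such that ψ vanishes on every nonnegative sequence whose first M components are zero. Define u ∈ ℝ^ℕ by u(i) = ψ(e^i) for i ≤ M and u(i) = 0 for i > M, where e^i denotes the sequence with 1 in coordinate i and 0 elsewhere. Then for every y ∈ ℝ^ℕ with y(i) ≥ 0 for all i, one has ψ(y) = ∑_{i ∈ ℕ} u(i) y(i) (the sum having only finitely many nonzero terms). -/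
open Filter

/-- If `ψ` is a positive linear functional on `ℝ^ℕ` and `M` is such that `ψ`
vanishes on every nonnegative sequence whose components indexed by `i ≤ M` are zero, then
`ψ` agrees on every nonnegative sequence `y` with `∑ᵢ u(i) y(i)` where `u(i) = ψ(eⁱ)` for
`i ≤ M` and `u(i) = 0` for `i > M` (`eⁱ` being the sequence with `1` at coordinate `i` and
`0` elsewhere). -/
theorem positive_functional_eq_finite_sum_on_nonneg
    (ψ : (ℕ → ℝ) →ₗ[ℝ] ℝ)
    (hpos : ∀ y : ℕ → ℝ, (∀ i, 0 ≤ y i) → 0 ≤ ψ y)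
    (M : ℕ)
    (hM : ∀ v : ℕ → ℝ, (∀ i, 0 ≤ v i) → (∀ i ≤ M, v i = 0) → ψ v = 0)
    (u : ℕ → ℝ)
    (hu : ∀ i, u i = if i ≤ M then ψ (fun j => if j = i then (1 : ℝ) else 0) else 0) :
    ∀ y : ℕ → ℝ, (∀ i, 0 ≤ y i) → ψ y = ∑ᶠ i, u i * y i := by
  intro y hy
  -- split y = w + v
  set v : ℕ → ℝ := fun i => if i ≤ M then 0 else y i with hv
  set w : ℕ → ℝ := fun i => if i ≤ M then y i else 0 with hw
  have hv0 : ψ v = 0 := by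
    apply hM
    · intro i; by_cases h : i ≤ M <;> simp [hv, h, hy i]
    · intro i h; simp [hv, h]
  have hsplit : y = w + v := by
    funext i; by_cases h : i ≤ M <;> simp [hw, hv, h]
  have hwsum : w = ∑ i ∈ Finset.range (M + 1), y i • (fun j => if j = i then (1 : ℝ) else 0) := by
    funext j
    by_cases h : j ≤ M
    · rw [Finset.sum_apply]
      rw [Finset.sum_eq_single j]
      · simp [hw, h]
      · intro b _ hb; simp [Ne.symm hb]
      · intro hj; exact absurd (Finset.mem_range.mpr (Nat.lt_succ_of_le h)) hj
    · rw [Finset.sum_apply]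
      rw [Finset.sum_eq_zero]
      · simp [hw, h]
      · intro b hb
        have : j ≠ b := by
          intro e; subst e; exact h (Nat.lt_succ_iff.mp (Finset.mem_range.mp hb))
        simp [this]
  have key : ψ y = ∑ i ∈ Finset.range (M + 1), u i * y i := by
    have : ψ y = ψ w := by rw [hsplit, map_add, hv0, add_zero]
    rw [this, hwsum, map_sum]
    apply Finset.sum_congr rfl
    intro i hi
    have hiM : i ≤ M := Nat.lt_succ_iff.mp (Finset.mem_range.mp hi)
    rw [map_smul, hu i, if_pos hiM]
    simp [mul_comm]
  rw [key]
  rw [finsum_eq_sum_of_support_subset _ (s := Finset.range (M + 1))]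
  intro i hi
  simp only [Function.mem_support] at hi
  by_contra h
  simp only [Finset.coe_range, Set.mem_Iio, not_lt] at h
  have : u i = 0 := by rw [hu i, if_neg (by omega)]
  exact hi (by simp [this])
end

section
/- For every positive linear functional ψ on ℝ^ℕ there exists a finitely supported sequence u : ℕ → ℝ with u(i) ≥ 0 for all i, such that ψ(y) = ∑_{i ∈ ℕ} u(i) y(i) for every y ∈ ℝ^ℕ. In other words, every positive linear functional on the space of all real sequences is represented by a nonnegative finitely supported vector. -/
/-- Every positive linear functional on the space `ℝ^ℕ` of all real sequences
is represented by a nonnegative finitely supported vector `u`: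
`ψ(y) = ∑ᵢ u(i) y(i)` for all `y`. -/
theorem positive_linear_functional_finite_support_representation
    (ψ : (ℕ → ℝ) →ₗ[ℝ] ℝ)
    (hpos : ∀ y : ℕ → ℝ, (∀ i, 0 ≤ y i) → 0 ≤ ψ y) :
    ∃ u : ℕ → ℝ, {i | u i ≠ 0}.Finite ∧ (∀ i, 0 ≤ u i) ∧
      ∀ y : ℕ → ℝ, ψ y = ∑ᶠ i, u i * y i := by
  classical
  set u : ℕ → ℝ := fun i => ψ (Pi.single i 1) with hu
  have hunn : ∀ i, 0 ≤ u i := by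
    intro i
    refine hpos _ ?_
    intro j
    by_cases h : j = i <;> simp [Pi.single_apply, h]
  -- ψ of a finitely supported "indicator-like" function
  have hg : ∀ (y : ℕ → ℝ) (T : Finset ℕ),
      ψ (∑ j ∈ T, y j • (Pi.single j 1 : ℕ → ℝ)) = ∑ j ∈ T, u j * y j := by
    intro y T
    rw [map_sum]
    refine Finset.sum_congr rfl fun j _ => ?_
    rw [map_smul]
    simp [hu, mul_comm]
  have hgfun : ∀ (y : ℕ → ℝ) (T : Finset ℕ) (i : ℕ),
      (∑ j ∈ T, y j • (Pi.single j 1 : ℕ → ℝ)) i = if i ∈ T then y i else 0 := by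
    intro y T i
    rw [Finset.sum_apply]
    simp only [Pi.smul_apply, Pi.single_apply, smul_eq_mul]
    rw [Finset.sum_congr rfl (fun j _ => by rw [mul_ite, mul_one, mul_zero])]
    simp [Finset.sum_ite_eq' T i y]
  -- truncation: lower bound for ψ of a nonnegative sequence
  have trunc : ∀ (y : ℕ → ℝ), (∀ i, 0 ≤ y i) → ∀ T : Finset ℕ,
      ∑ j ∈ T, u j * y j ≤ ψ y := by
    intro y hy T
    set g := ∑ j ∈ T, y j • (Pi.single j 1 : ℕ → ℝ) with hgdef
    have h1 : ψ y = ψ (y - g) + ψ g := by rw [map_sub]; ring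
    have h2 : 0 ≤ ψ (y - g) := by
      refine hpos _ fun i => ?_
      rw [Pi.sub_apply, hgdef, hgfun]
      by_cases h : i ∈ T <;> simp [h, hy i]
    rw [h1, hg]
    linarith
  -- finiteness of support of u
  have hfin : {i | u i ≠ 0}.Finite := by
    by_contra hinf
    have hinf : {i | u i ≠ 0}.Infinite := hinf
    set y : ℕ → ℝ := fun i => if u i = 0 then 0 else (u i)⁻¹ with hy
    have hynn : ∀ i, 0 ≤ y i := by
      intro i
      simp only [hy]
      split_ifs with h
      · exact le_refl 0
      · exact inv_nonneg.2 (hunn i)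
    have hb : ∀ n : ℕ, (n : ℝ) ≤ ψ y := by
      intro n
      obtain ⟨T, hTsub, hTcard⟩ := hinf.exists_subset_card_eq n
      have h1 : ∀ j ∈ T, u j * y j = 1 := by
        intro j hj
        have hj0 : u j ≠ 0 := hTsub hj
        simp [hy, hj0, mul_inv_cancel₀ hj0]
      have h2 : ∑ j ∈ T, u j * y j = (n : ℝ) := by
        rw [Finset.sum_congr rfl h1, Finset.sum_const, hTcard, nsmul_eq_mul, mul_one]
      linarith [trunc y hynn T]
    obtain ⟨n, hn⟩ := exists_nat_gt (ψ y)
    linarith [hb n]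
  -- a bound beyond which u vanishes
  set S := hfin.toFinset with hS
  set M := S.sup id + 1 with hM
  have hMu : ∀ i, M ≤ i → u i = 0 := by
    intro i hi
    by_contra h
    have : i ∈ S := hfin.mem_toFinset.2 h
    have := Finset.le_sup (f := id) this
    simp only [id] at this
    omega
  -- representation for nonnegative sequences
  have hrep : ∀ w : ℕ → ℝ, (∀ i, 0 ≤ w i) →
      ψ w = ∑ j ∈ Finset.range M, u j * w j := by
    intro w hw
    set t : ℕ → (ℕ → ℝ) := fun N i => if i < N then 0 else w i with ht
    have htnn : ∀ N i, 0 ≤ t N i := by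
      intro N i; by_cases h : i < N <;> simp [ht, h, hw i]
    set c := ψ (t M) with hc
    have hcnn : 0 ≤ c := hpos _ (htnn M)
    -- tails beyond M all have the same ψ-value c
    have htail : ∀ N, M ≤ N → ψ (t N) = c := by
      intro N hN
      have hdecomp : t M = t N + ∑ j ∈ Finset.Ico M N, w j • (Pi.single j 1 : ℕ → ℝ) := by
        funext i
        rw [Pi.add_apply, hgfun w (Finset.Ico M N) i]
        simp only [ht, Finset.mem_Ico]
        by_cases h1 : i < M
        · have h2 : i < N := lt_of_lt_of_le h1 hN
          have h3 : ¬ M ≤ i := by omega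
          simp [h1, h2, h3]
        · by_cases h2 : i < N
          · have h3 : M ≤ i := by omega
            simp [h1, h2, h3]
          · have h3 : M ≤ i := by omega
            simp [h1, h2, h3]
      have : ψ (t M) = ψ (t N) + ∑ j ∈ Finset.Ico M N, u j * w j := by
        rw [hdecomp, map_add, hg]
      have hzero : ∑ j ∈ Finset.Ico M N, u j * w j = 0 := by
        refine Finset.sum_eq_zero fun j hj => ?_
        rw [hMu j (Finset.mem_Ico.1 hj).1, zero_mul]
      rw [hzero, add_zero] at this
      exact this.symm
    -- c = 0, by comparing with Y i = (i+1) * w i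
    have hc0 : c = 0 := by
      set Y : ℕ → ℝ := fun i => (i + 1 : ℝ) * w i with hY
      have hYnn : ∀ i, 0 ≤ Y i := fun i => mul_nonneg (by positivity) (hw i)
      have hbound : ∀ m : ℕ, (m : ℝ) * c ≤ ψ Y := by
        intro m
        set g := ∑ k ∈ Finset.range m, t (M + 1 + k) with hgd
        have hψg : ψ g = (m : ℝ) * c := by
          rw [hgd, map_sum]
          rw [Finset.sum_congr rfl (fun k _ => htail (M + 1 + k) (by omega))]
          simp [mul_comm]
        have hYg : ∀ i, g i ≤ Y i := by
          intro i
          rw [hgd, Finset.sum_apply]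
          have hle : ∀ k ∈ Finset.range m, t (M + 1 + k) i ≤
              (if k < i + 1 then w i else 0) := by
            intro k _
            simp only [ht]
            by_cases h1 : i < M + 1 + k
            · simp only [if_pos h1]
              by_cases h2 : k < i + 1 <;> simp [h2, hw i]
            · have h2 : k < i + 1 := by omega
              simp [h1, h2]
          calc ∑ k ∈ Finset.range m, t (M + 1 + k) i
              ≤ ∑ k ∈ Finset.range m, (if k < i + 1 then w i else 0) :=
                Finset.sum_le_sum hle
            _ = ((Finset.range m).filter (fun k => k < i + 1)).card • w i := by
                rw [← Finset.sum_filter, Finset.sum_const]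
            _ ≤ (i + 1 : ℝ) * w i := by
                rw [nsmul_eq_mul]
                refine mul_le_mul_of_nonneg_right ?_ (hw i)
                have hsub : (Finset.range m).filter (fun k => k < i + 1) ⊆
                    Finset.range (i + 1) := by
                  intro k hk
                  simp only [Finset.mem_filter, Finset.mem_range] at hk ⊢
                  exact hk.2
                have := Finset.card_le_card hsub
                rw [Finset.card_range] at this
                exact_mod_cast this
        have h1 : 0 ≤ ψ (Y - g) := by
          refine hpos _ fun i => ?_
          simp only [Pi.sub_apply]
          linarith [hYg i]
        have h2 : ψ Y = ψ (Y - g) + ψ g := by rw [map_sub]; ring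
        rw [h2, hψg]
        linarith
      by_contra hne
      have hcpos : 0 < c := lt_of_le_of_ne hcnn (Ne.symm hne)
      obtain ⟨m, hm⟩ := exists_nat_gt (ψ Y / c)
      have : ψ Y < (m : ℝ) * c := by
        rw [div_lt_iff₀ hcpos] at hm
        linarith
      linarith [hbound m]
    -- decompose w = head + tail
    have hdecomp : w = (∑ j ∈ Finset.range M, w j • (Pi.single j 1 : ℕ → ℝ)) + t M := by
      funext i
      rw [Pi.add_apply, hgfun w (Finset.range M) i]
      simp only [ht, Finset.mem_range]
      by_cases h : i < M <;> simp [h]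
    calc ψ w = ψ (∑ j ∈ Finset.range M, w j • (Pi.single j 1 : ℕ → ℝ)) + ψ (t M) := by
          rw [← map_add, ← hdecomp]
      _ = ∑ j ∈ Finset.range M, u j * w j := by rw [hg, ← hc, hc0, add_zero]
  -- conclude
  refine ⟨u, hfin, hunn, fun y => ?_⟩
  set p : ℕ → ℝ := fun i => max (y i) 0 with hp
  set n : ℕ → ℝ := fun i => max (-(y i)) 0 with hn
  have hpn : y = p - n := by
    funext i
    simp only [Pi.sub_apply, hp, hn]
    rcases le_total (y i) 0 with h | h
    · rw [max_eq_right h, max_eq_left (by linarith)]; ring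
    · rw [max_eq_left h, max_eq_right (by linarith)]; ring
  have hsum : ψ y = ∑ j ∈ Finset.range M, u j * y j := by
    rw [hpn, map_sub, hrep p (fun i => le_max_right _ _),
      hrep n (fun i => le_max_right _ _), ← Finset.sum_sub_distrib]
    refine Finset.sum_congr rfl fun j _ => ?_
    simp only [Pi.sub_apply]
    ring
  rw [hsum]
  refine (finsum_eq_sum_of_support_subset _ ?_).symm
  intro i hi
  simp only [Function.mem_support] at hi
  simp only [Finset.coe_range, Set.mem_Iio]
  by_contra h
  push_neg at h
  rw [hMu i h, zero_mul] at hi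
  exact hi rfl
end

section
/- Fix n ∈ ℕ, sequences a^1, …, a^n ∈ ℝ^ℕ, b ∈ ℝ^ℕ, and φ ∈ ℝ^n. Then the set of values { ψ(b) : ψ a positive linear functional on ℝ^ℕ with ψ(a^k) = φ_k for k = 1, …, n } is equal to the set of values { ∑_{i ∈ ℕ} b(i) v(i) : v : ℕ → ℝ finitely supported, v(i) ≥ 0 for all i, and ∑_{i ∈ ℕ} a^k(i) v(i) = φ_k for k = 1, …, n }. Consequently, the supremum of the algebraic Lagrangian dual (DSILP) over positive linear functionals on ℝ^ℕ equals the supremum of the finite support dual (FDSILP), and there is a zero duality gap between the primal semi-infinite linear program and (DSILP) if and only if there is a zero duality gap between the primal and (FDSILP). -/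
open Finset

private lemma eval_finsupp (ψ : (ℕ → ℝ) →ₗ[ℝ] ℝ) (y : ℕ → ℝ) (s : Finset ℕ)
    (hy : ∀ i ∉ s, y i = 0) :
    ψ y = ∑ i ∈ s, y i * ψ (Pi.single i 1) := by
  have hrep : y = ∑ i ∈ s, y i • (Pi.single i 1 : ℕ → ℝ) := by
    funext j
    rw [Finset.sum_apply]
    by_cases hj : j ∈ s
    · rw [Finset.sum_eq_single j]
      · simp
      · intro i hi hij
        simp [Pi.single_apply, Ne.symm hij]
      · intro h; exact absurd hj h
    · rw [hy j hj]
      refine (Finset.sum_eq_zero ?_).symm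
      intro i hi
      have hij : i ≠ j := fun h => hj (h ▸ hi)
      simp [Pi.single_apply, Ne.symm hij]
  calc ψ y = ψ (∑ i ∈ s, y i • (Pi.single i 1 : ℕ → ℝ)) := by rw [← hrep]
    _ = ∑ i ∈ s, y i * ψ (Pi.single i 1) := by
        rw [map_sum]; simp [map_smul]

private lemma psi_vanish (ψ : (ℕ → ℝ) →ₗ[ℝ] ℝ)
    (hpos : ∀ y : ℕ → ℝ, (∀ i, 0 ≤ y i) → 0 ≤ ψ y)
    (y : ℕ → ℝ) (hy0 : ∀ i, 0 ≤ y i)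
    (hyv : ∀ i, ψ (Pi.single i 1) ≠ 0 → y i = 0) : ψ y = 0 := by
  have h1 : 0 ≤ ψ y := hpos y hy0
  by_contra h
  have hypos : 0 < ψ y := lt_of_le_of_ne h1 (Ne.symm h)
  set z : ℕ → ℝ := fun i => (i : ℝ) * y i with hz
  have key : ∀ k : ℕ, (k : ℝ) * ψ y ≤ ψ z := by
    intro k
    set w : ℕ → ℝ := fun i => if i < k then ((k : ℝ) - i) * y i else 0 with hw
    have hw0 : ψ w = 0 := by
      rw [eval_finsupp ψ w (Finset.range k)
        (by intro i hi; simp only [Finset.mem_range] at hi; simp [hw, hi])]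
      refine Finset.sum_eq_zero fun i hi => ?_
      by_cases hv : ψ (Pi.single i 1) = 0
      · rw [hv, mul_zero]
      · simp [hw, hyv i hv]
    have hpt : ∀ i, 0 ≤ (z + w - (k : ℝ) • y) i := by
      intro i
      simp only [Pi.add_apply, Pi.sub_apply, Pi.smul_apply, smul_eq_mul, hz, hw]
      by_cases hik : i < k
      · simp only [if_pos hik]; ring_nf; exact le_of_eq (by ring)
      · simp only [if_neg hik]
        have : (k : ℝ) ≤ (i : ℝ) := by exact_mod_cast Nat.le_of_not_lt hik
        nlinarith [hy0 i]
    have := hpos _ hpt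
    rw [map_sub, map_add, map_smul, hw0] at this
    simp only [smul_eq_mul] at this
    linarith
  have hk := key (Nat.ceil (ψ z / ψ y) + 1)
  have h2 : ψ z / ψ y < ((Nat.ceil (ψ z / ψ y) : ℝ) + 1) := by
    have := Nat.le_ceil (ψ z / ψ y); linarith
  have h3 : ψ z < ((Nat.ceil (ψ z / ψ y) + 1 : ℕ) : ℝ) * ψ y := by
    push_cast
    rw [div_lt_iff₀ hypos] at h2
    linarith
  linarith

private lemma psi_fin (ψ : (ℕ → ℝ) →ₗ[ℝ] ℝ)
    (hpos : ∀ y : ℕ → ℝ, (∀ i, 0 ≤ y i) → 0 ≤ ψ y) :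
    {i : ℕ | ψ (Pi.single i 1) ≠ 0}.Finite := by
  classical
  by_contra hS
  have hS' : {i : ℕ | ψ (Pi.single i 1) ≠ 0}.Infinite := hS
  set g := hS'.natEmbedding with hg
  have hsingle : ∀ i : ℕ, 0 ≤ ψ (Pi.single i 1) := by
    intro i
    refine hpos _ fun j => ?_
    rcases eq_or_ne j i with rfl | hne
    · simp
    · simp [Pi.single_apply, hne]
  have hgpos : ∀ k : ℕ, 0 < ψ (Pi.single ((g k : ℕ)) 1) :=
    fun k => lt_of_le_of_ne (hsingle _) (Ne.symm (g k).2)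
  set y : ℕ → ℝ := fun i =>
    if h : ∃ k : ℕ, ((g k : ℕ) : ℕ) = i then (h.choose : ℝ) / ψ (Pi.single i 1) else 0 with hy
  have hy0 : ∀ i, 0 ≤ y i := by
    intro i
    simp only [hy]
    split
    · next h =>
      have hi : ψ (Pi.single i 1) ≠ 0 := h.choose_spec ▸ (g h.choose).2
      have : 0 < ψ (Pi.single i 1) := lt_of_le_of_ne (hsingle i) (Ne.symm hi)
      positivity
    · exact le_rfl
  have hginj : Function.Injective (fun k : ℕ => ((g k : ℕ))) :=
    fun k₁ k₂ h => g.injective (Subtype.coe_injective h)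
  have key : ∀ k : ℕ, (k : ℝ) ≤ ψ y := by
    intro k
    set i₀ : ℕ := (g k : ℕ) with hi₀
    set c : ℝ := ψ (Pi.single i₀ 1) with hc
    have hcpos : 0 < c := hgpos k
    have hyi₀ : y i₀ = (k : ℝ) / c := by
      have hex : ∃ k' : ℕ, ((g k' : ℕ)) = i₀ := ⟨k, rfl⟩
      have : hex.choose = k := hginj hex.choose_spec
      simp only [hy, dif_pos hex, this, hc]
    have hpt : ∀ j, 0 ≤ (y - ((k : ℝ) / c) • (Pi.single i₀ 1 : ℕ → ℝ)) j := by
      intro j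
      simp only [Pi.sub_apply, Pi.smul_apply, smul_eq_mul]
      rcases eq_or_ne j i₀ with rfl | hne
      · simp [hyi₀]
      · simp only [Pi.single_apply, if_neg hne, mul_zero, sub_zero]
        exact hy0 j
    have := hpos _ hpt
    rw [map_sub, map_smul] at this
    have hcc : ((k : ℝ) / c) • ψ (Pi.single i₀ 1) = (k : ℝ) := by
      rw [smul_eq_mul, ← hc, div_mul_cancel₀]
      exact ne_of_gt hcpos
    rw [hcc] at this
    linarith
  have hk := key (Nat.ceil (ψ y) + 1)
  have := Nat.le_ceil (ψ y)
  push_cast at hk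
  linarith

private lemma psi_repr (ψ : (ℕ → ℝ) →ₗ[ℝ] ℝ)
    (hpos : ∀ y : ℕ → ℝ, (∀ i, 0 ≤ y i) → 0 ≤ ψ y)
    (s : Finset ℕ) (hs : ∀ i, ψ (Pi.single i 1) ≠ 0 → i ∈ s)
    (y : ℕ → ℝ) :
    ψ y = ∑ i ∈ s, y i * ψ (Pi.single i 1) := by
  classical
  set y₁ : ℕ → ℝ := fun i => if i ∈ s then y i else 0 with hy₁
  have h1 : ψ y₁ = ∑ i ∈ s, y i * ψ (Pi.single i 1) := by
    rw [eval_finsupp ψ y₁ s (fun i hi => by simp [hy₁, hi])]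
    exact Finset.sum_congr rfl fun i hi => by simp [hy₁, hi]
  set p : ℕ → ℝ := fun i => max ((y - y₁) i) 0 with hp
  set q : ℕ → ℝ := fun i => max (-((y - y₁) i)) 0 with hq
  have hvan : ∀ i, ψ (Pi.single i 1) ≠ 0 → (y - y₁) i = 0 := by
    intro i hv
    simp [hy₁, Pi.sub_apply, hs i hv]
  have hpz : ψ p = 0 :=
    psi_vanish ψ hpos p (fun i => le_max_right _ _)
      (fun i hv => by simp only [hp]; rw [hvan i hv]; simp)
  have hqz : ψ q = 0 :=
    psi_vanish ψ hpos q (fun i => le_max_right _ _)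
      (fun i hv => by simp only [hq]; rw [hvan i hv]; simp)
  have hpq : y - y₁ = p - q := by
    funext i
    simp only [hp, hq, Pi.sub_apply]
    rcases le_total (y i) (y₁ i) with h | h
    · rw [max_eq_right (by linarith), max_eq_left (by linarith)]; ring
    · rw [max_eq_left (by linarith), max_eq_right (by linarith)]; ring
  have : ψ (y - y₁) = 0 := by rw [hpq, map_sub, hpz, hqz, sub_zero]
  rw [map_sub] at this
  linarith [h1, this]

private noncomputable def finsupLF (v : ℕ → ℝ) (s : Finset ℕ) : (ℕ → ℝ) →ₗ[ℝ] ℝ where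
  toFun y := ∑ i ∈ s, v i * y i
  map_add' x y := by simp [mul_add, Finset.sum_add_distrib]
  map_smul' c y := by simp [Finset.mul_sum, mul_left_comm]
/-- For a countable semi-infinite linear program with data
`a¹, …, aⁿ, b ∈ ℝ^ℕ` and objective `φ ∈ ℝⁿ`, the set of objective values of the algebraic
Lagrangian dual (over positive linear functionals on `ℝ^ℕ`) equals the set of objective
values of the finite support dual. Consequently the two dual suprema coincide, and there
is a zero duality gap between the primal (SILP) and (DSILP) iff there is a zero duality
gap between the primal and (FDSILP). -/
theorem algebraic_dual_eq_finite_support_dual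
    (n : ℕ) (a : Fin n → ℕ → ℝ) (b : ℕ → ℝ) (φ : Fin n → ℝ) :
    let D : Set ℝ := {r | ∃ ψ : (ℕ → ℝ) →ₗ[ℝ] ℝ,
      (∀ y : ℕ → ℝ, (∀ i, 0 ≤ y i) → 0 ≤ ψ y) ∧
      (∀ k : Fin n, ψ (a k) = φ k) ∧ ψ b = r}
    let F : Set ℝ := {r | ∃ v : ℕ → ℝ, {i | v i ≠ 0}.Finite ∧ (∀ i, 0 ≤ v i) ∧
      (∀ k : Fin n, ∑ᶠ i, a k i * v i = φ k) ∧ ∑ᶠ i, b i * v i = r}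
    let primal : ℝ := sInf {r | ∃ x : Fin n → ℝ,
      (∀ i : ℕ, b i ≤ ∑ k : Fin n, a k i * x k) ∧ ∑ k : Fin n, φ k * x k = r}
    D = F ∧ sSup D = sSup F ∧ (primal = sSup D ↔ primal = sSup F) := by
  intro D F primal
  have hDF : D = F := by
    ext r
    constructor
    · rintro ⟨ψ, hpos, hcon, hb⟩
      set v : ℕ → ℝ := fun i => ψ (Pi.single i 1) with hv
      have hfin : {i | v i ≠ 0}.Finite := psi_fin ψ hpos
      set s : Finset ℕ := hfin.toFinset with hsdef
      have hs : ∀ i, ψ (Pi.single i 1) ≠ 0 → i ∈ s := by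
        intro i hi
        simp [hsdef, Set.Finite.mem_toFinset]
        exact hi
      have hrepr : ∀ y : ℕ → ℝ, ψ y = ∑ i ∈ s, y i * v i :=
        fun y => psi_repr ψ hpos s hs y
      have hv0 : ∀ i, 0 ≤ v i := by
        intro i
        refine hpos _ fun j => ?_
        rcases eq_or_ne j i with rfl | hne
        · simp
        · simp [Pi.single_apply, hne]
      have hsum : ∀ y : ℕ → ℝ, ∑ᶠ i, y i * v i = ψ y := by
        intro y
        rw [finsum_eq_finset_sum_of_support_subset _ (s := s) ?_, hrepr y]
        intro i hi
        have : v i ≠ 0 := by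
          intro h0
          simp [Function.mem_support, h0] at hi
        simp [hsdef, Set.Finite.mem_toFinset]
        exact this
      exact ⟨v, hfin, hv0, fun k => by rw [hsum (a k), hcon k],
        by rw [hsum b, hb]⟩
    · rintro ⟨v, hfin, hv0, hcon, hb⟩
      set s : Finset ℕ := hfin.toFinset with hsdef
      refine ⟨finsupLF v s, ?_, ?_, ?_⟩
      · intro y hy
        exact Finset.sum_nonneg fun i _ => mul_nonneg (hv0 i) (hy i)
      · intro k
        rw [← hcon k]
        rw [finsum_eq_finset_sum_of_support_subset _ (s := s) ?_]
        · exact Finset.sum_congr rfl fun i _ => mul_comm (v i) (a k i)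
        · intro i hi
          have : v i ≠ 0 := by
            intro h0
            simp [Function.mem_support, h0] at hi
          simp [hsdef, Set.Finite.mem_toFinset]
          exact this
      · rw [← hb]
        rw [finsum_eq_finset_sum_of_support_subset _ (s := s) ?_]
        · exact Finset.sum_congr rfl fun i _ => mul_comm (v i) (b i)
        · intro i hi
          have : v i ≠ 0 := by
            intro h0
            simp [Function.mem_support, h0] at hi
          simp [hsdef, Set.Finite.mem_toFinset]
          exact this
  exact ⟨hDF, by rw [hDF], by rw [hDF]⟩
end

section
/- There is no positive linear functional ψ̄ on ℝ^ℕ extending the limit functional on the space of convergent sequences; that is, there is no ℝ-linear map ψ̄ : (ℕ → ℝ) → ℝ such that ψ̄(y) ≥ 0 whenever y(i) ≥ 0 for all i, and ψ̄(v) = lim_{i→∞} v(i) for every convergent sequence v ∈ ℝ^ℕ. -/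
open Filter

/-- The limit functional on convergent sequences cannot be extended to a
positive linear functional on all of `ℝ^ℕ`. -/
theorem no_positive_extension_of_limit_functional :
    ¬ ∃ ψ : (ℕ → ℝ) →ₗ[ℝ] ℝ,
      (∀ y : ℕ → ℝ, (∀ i, 0 ≤ y i) → 0 ≤ ψ y) ∧
      (∀ (v : ℕ → ℝ) (L : ℝ), Tendsto v atTop (nhds L) → ψ v = L) := by
  rintro ⟨ψ, hpos, hlim⟩
  set y : ℕ → ℝ := fun i => (i : ℝ) with hy
  obtain ⟨n, hn⟩ := exists_nat_gt (ψ y)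
  set c : ℕ → ℝ := fun i => max ((n : ℝ) - i) 0 with hc
  have hc0 : ψ c = 0 := by
    apply hlim
    apply Tendsto.congr' (f₁ := fun _ => (0 : ℝ))
    · filter_upwards [eventually_ge_atTop n] with i hi
      have h : ((n : ℝ) - i) ≤ 0 := sub_nonpos.mpr (Nat.cast_le.mpr hi)
      simp [hc, max_eq_right h]
    · exact tendsto_const_nhds
  have key : 0 ≤ ψ (y + c - fun _ => (n : ℝ)) := by
    apply hpos
    intro i
    simp only [Pi.add_apply, Pi.sub_apply, hy, hc]
    rcases le_or_gt (n : ℝ) (i : ℝ) with h | h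
    · have : max ((n : ℝ) - i) 0 = 0 := max_eq_right (sub_nonpos.mpr h)
      linarith
    · have : max ((n : ℝ) - i) 0 = (n : ℝ) - i := max_eq_left (by linarith)
      linarith
  have hconst : ψ (fun _ => (n : ℝ)) = (n : ℝ) := hlim _ _ tendsto_const_nhds
  rw [map_sub, map_add, hc0, hconst] at key
  linarith
end

section
/- The finite support dual of the semi-infinite linear program infimize x₁ subject to x₁ + (1/i²)x₂ ≥ 2/i (i a positive integer) is infeasible: there is no finitely supported function u from the positive integers to ℝ with u(i) ≥ 0 for all i such that ∑_i u(i) = 1 and ∑_i (1/i²) u(i) = 0. Hence the finite support dual has value −∞ while the primal has value 0, i.e., there is an infinite duality gap with the finite support dual. -/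
/-!
A dual feasible `u` is nonnegative with `∑ᵢ u(i) / i² = 0`; as every weight `1 / i²` is
positive this forces `u = 0`, contradicting `∑ᵢ u(i) = 1`. Primally, `(ε, 1 / ε)` is feasible for every `ε > 0` by AM-GM
(`ε + 1 / (i² ε) ≥ 2 / i`), while a feasible `x` satisfies `x₁ ≥ (2 i - x₂) / i²`, which is
positive once `2 i > x₂`; so the primal value is `0`.
-/

open Function Set

theorem eq_zero_of_finsum_mul_eq_zero {ι R : Type*} [Semiring R] [PartialOrder R]
    [IsOrderedRing R] [NoZeroDivisors R] {w u : ι → R} (hu : (support u).Finite)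
    (hw : ∀ i, 0 < w i) (hu0 : ∀ i, 0 ≤ u i) (h : ∑ᶠ i, w i * u i = 0) : u = 0 := by
  have hterm : ∀ i, 0 ≤ w i * u i := fun i ↦ mul_nonneg (hw i).le (hu0 i)
  funext j
  have hle : w j * u j ≤ 0 :=
    h ▸ single_le_finsum j (hu.subset (support_mul_subset_right _ _)) hterm
  exact (mul_eq_zero.mp (hle.antisymm (hterm j))).resolve_left (hw j).ne'

def IsDualFeasible (u : ℕ+ → ℝ) : Prop :=
  {i | u i ≠ 0}.Finite ∧ (∀ i, 0 ≤ u i) ∧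
    (∑ᶠ i : ℕ+, u i) = 1 ∧ (∑ᶠ i : ℕ+, (1 / ((i : ℕ) : ℝ) ^ 2) * u i) = 0

def IsPrimalFeasible (x : ℝ × ℝ) : Prop :=
  ∀ i : ℕ+, x.1 + (1 / ((i : ℕ) : ℝ) ^ 2) * x.2 ≥ 2 / ((i : ℕ) : ℝ)

theorem not_isDualFeasible (u : ℕ+ → ℝ) : ¬ IsDualFeasible u := by
  rintro ⟨hfin, hu0, hsum, hweighted⟩
  have hu : u = 0 := eq_zero_of_finsum_mul_eq_zero hfin (fun i ↦ by positivity) hu0 hweighted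
  simp [hu] at hsum

theorem isPrimalFeasible_of_pos {ε : ℝ} (hε : 0 < ε) : IsPrimalFeasible (ε, 1 / ε) := by
  intro i
  have hi : (0 : ℝ) < (i : ℕ) := by exact_mod_cast i.pos
  have key : 2 * ε * (i : ℕ) ≤ ε ^ 2 * ((i : ℕ) : ℝ) ^ 2 + 1 := by
    nlinarith [sq_nonneg (ε * (i : ℕ) - 1)]
  rw [ge_iff_le, ← sub_nonneg]
  have expand : ε + 1 / ((i : ℕ) : ℝ) ^ 2 * (1 / ε) - 2 / (i : ℕ) =
      (ε ^ 2 * ((i : ℕ) : ℝ) ^ 2 + 1 - 2 * ε * (i : ℕ)) / (ε * ((i : ℕ) : ℝ) ^ 2) := by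
    field_simp
  rw [expand]
  exact div_nonneg (by linarith) (by positivity)

theorem IsPrimalFeasible.fst_nonneg {x : ℝ × ℝ} (hx : IsPrimalFeasible x) : 0 ≤ x.1 := by
  set n : ℕ := ⌈x.2 / 2⌉₊ + 1
  have hn : x.2 < 2 * n := by
    have := Nat.le_ceil (x.2 / 2)
    push_cast [n]
    linarith
  have hxn : 2 / (n : ℝ) ≤ x.1 + 1 / (n : ℝ) ^ 2 * x.2 := hx ⟨n, Nat.succ_pos _⟩
  have bound : (2 * n - x.2) / (n : ℝ) ^ 2 ≤ x.1 := by
    have : (2 * n - x.2) / (n : ℝ) ^ 2 = 2 / n - 1 / (n : ℝ) ^ 2 * x.2 := by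
      field_simp
    linarith
  exact (div_nonneg (by linarith) (by positivity)).trans bound

theorem sInf_fst_isPrimalFeasible : sInf {r : ℝ | ∃ x, IsPrimalFeasible x ∧ x.1 = r} = 0 := by
  have hsub : Ioi 0 ⊆ {r : ℝ | ∃ x, IsPrimalFeasible x ∧ x.1 = r} :=
    fun ε hε ↦ ⟨(ε, 1 / ε), isPrimalFeasible_of_pos hε, rfl⟩
  have hsup : {r : ℝ | ∃ x, IsPrimalFeasible x ∧ x.1 = r} ⊆ Ici 0 := by
    rintro _ ⟨x, hx, rfl⟩
    exact hx.fst_nonneg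
  exact (isGLB_Ioi.of_subset_of_superset isGLB_Ici hsub hsup).csInf_eq
    ((nonempty_Ioi (a := (0 : ℝ))).mono hsub)

/-- The finite support dual of the SILP `inf x₁ s.t. x₁ + (1/i²)x₂ ≥ 2/i`
(`i` a positive integer) is infeasible: no nonnegative finitely supported `u` satisfies
`∑ᵢ u(i) = 1` and `∑ᵢ (1/i²) u(i) = 0`. Hence the finite support dual value is `−∞`
(the supremum in `EReal` of the empty value set is `⊥`) while the primal value is `0`:
an infinite duality gap. -/
theorem finite_support_dual_infeasible :
    (¬ ∃ u : ℕ+ → ℝ, {i | u i ≠ 0}.Finite ∧ (∀ i, 0 ≤ u i) ∧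
        (∑ᶠ i : ℕ+, u i) = 1 ∧ (∑ᶠ i : ℕ+, (1 / ((i : ℕ) : ℝ) ^ 2) * u i) = 0) ∧
    sSup {r : EReal | ∃ u : ℕ+ → ℝ, {i | u i ≠ 0}.Finite ∧ (∀ i, 0 ≤ u i) ∧
        (∑ᶠ i : ℕ+, u i) = 1 ∧ (∑ᶠ i : ℕ+, (1 / ((i : ℕ) : ℝ) ^ 2) * u i) = 0 ∧
        ((∑ᶠ i : ℕ+, (2 / ((i : ℕ) : ℝ)) * u i : ℝ) : EReal) = r} = ⊥ ∧
    sInf {r : ℝ | ∃ x : ℝ × ℝ,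
      (∀ i : ℕ+, x.1 + (1 / ((i : ℕ) : ℝ) ^ 2) * x.2 ≥ 2 / ((i : ℕ) : ℝ)) ∧
      x.1 = r} = 0 := by
  refine ⟨fun ⟨u, hu⟩ ↦ not_isDualFeasible u hu, ?_, sInf_fst_isPrimalFeasible⟩
  exact sSup_eq_bot.mpr fun _ ⟨u, h₁, h₂, h₃, h₄, _⟩ ↦
    (not_isDualFeasible u ⟨h₁, h₂, h₃, h₄⟩).elim
end
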